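/- In the q-shuffle algebra V on letters x, y, for every natural number n, ((yyxx)^n yy) ⋆ x − x ⋆ ((yyxx)^n yy) = (1 − q^{-4})·((yyxx)^n yyx − xyy(xxyy)^n), where all words on the right-hand side are concatenation words. -/
import Mathlib


noncomputable section

/-- The letter `x`. -/
def bX : Bool := false
/-- The letter `y`. -/
def bY : Bool := true

/-- The bilinear pairing on letters: `⟨x,x⟩ = ⟨y,y⟩ = 2`, `⟨x,y⟩ = ⟨y,x⟩ = -2`. -/
def qbr (a b : Bool) : ℤ := if a = b then 2 else -2

/-- The sum `⟨a, w₁⟩ + ⋯ + ⟨a, wₙ⟩` for a letter `a` and a word `w`. -/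
def qE (a : Bool) (w : List Bool) : ℤ := (w.map (qbr a)).sum

/-- Linear map on the free algebra (words-indexed finsupps) given by prepending a letter. -/
def qcons (F : Type*) [Field F] (a : Bool) :
    (List Bool →₀ F) →ₗ[F] (List Bool →₀ F) :=
  Finsupp.lmapDomain F F (List.cons a)

/-- The q-shuffle product of two words, as an element of the free algebra `List Bool →₀ F`.
Defined by the recursion `u ⋆ v = u₁((u₂⋯u_r) ⋆ v) + q^{⟨v₁,u₁⟩+⋯+⟨v₁,u_r⟩} v₁(u ⋆ (v₂⋯v_s))`. -/
def qsh {F : Type*} [Field F] (q : F) : List Bool → List Bool → (List Bool →₀ F)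
  | [], v => Finsupp.single v 1
  | a :: u, [] => Finsupp.single (a :: u) 1
  | a :: u, b :: v =>
      qcons F a (qsh q u (b :: v)) +
        (q ^ (qbr b a + qE b u)) • qcons F b (qsh q (a :: u) v)
  termination_by u v => u.length + v.length
  decreasing_by all_goals (simp only [List.length_cons]; omega)

/-- Concatenation power of a word. -/
def wpow (w : List Bool) : ℕ → List Bool
  | 0 => []
  | n + 1 => w ++ wpow w n

def wXXYY : List Bool := [bX, bX, bY, bY]
def wYYXX : List Bool := [bY, bY, bX, bX]
def wXY : List Bool := [bX, bY]
def wYX : List Bool := [bY, bX]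

lemma qE_cons (a c : Bool) (u : List Bool) : qE a (c :: u) = qbr a c + qE a u := by
  simp [qE]

lemma qE_append (a : Bool) (u v : List Bool) : qE a (u ++ v) = qE a u + qE a v := by
  simp [qE]

lemma qcons_single {F : Type*} [Field F] (a : Bool) (w : List Bool) (c : F) :
    qcons F a (Finsupp.single w c) = Finsupp.single (a :: w) c := by
  simp [qcons, Finsupp.lmapDomain, Finsupp.mapDomain_single]

lemma qshA {F : Type*} [Field F] (q : F) (w : List Bool) (a b : Bool) :
    qsh q (a :: w) [b] = qcons F a (qsh q w [b]) +
      (q ^ (qbr b a + qE b w)) • Finsupp.single (b :: a :: w) 1 := by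
  rw [qsh]; congr 1; rw [qsh]
  simp [qcons_single]

lemma qshB {F : Type*} [Field F] (q : F) (v : List Bool) (a b : Bool) :
    qsh q [a] (b :: v) = Finsupp.single (a :: b :: v) 1 +
      (q ^ (qbr b a)) • qcons F b (qsh q [a] v) := by
  rw [qsh]
  simp [qE, qcons_single, qsh]

lemma qsh_nil_left {F : Type*} [Field F] (q : F) (v : List Bool) :
    qsh q [] v = Finsupp.single v 1 := by
  rw [qsh]

lemma qsh_nil_right {F : Type*} [Field F] (q : F) (a : Bool) (u : List Bool) :
    qsh q (a :: u) [] = Finsupp.single (a :: u) 1 := by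
  rw [qsh]

lemma qE_bX_wpow (n : ℕ) : qE bX (wpow wYYXX n) = 0 := by
  induction n with
  | zero => simp [wpow, qE]
  | succ n ih => rw [wpow, qE_append, ih]; simp [wYYXX, qE, qbr, bX, bY]

lemma qE_bX_word (n : ℕ) : qE bX (wpow wYYXX n ++ [bY, bY]) = -4 := by
  rw [qE_append, qE_bX_wpow]; simp [qE, qbr, bX, bY]

lemma word_shift (n : ℕ) :
    wpow wYYXX n ++ [bY, bY] = bY :: bY :: wpow wXXYY n := by
  induction n with
  | zero => simp [wpow]
  | succ n ih =>
      show (wYYXX ++ wpow wYYXX n) ++ [bY, bY] = bY :: bY :: (wXXYY ++ wpow wXXYY n)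
      rw [List.append_assoc, ih]
      simp [wYYXX, wXXYY]

lemma step {F : Type*} [Field F] (q : F) (hq : q ≠ 0) (w : List Bool)
    (h : qE bX w = -4) :
    qsh q (bY::bY::bX::bX::w) [bX] - qsh q [bX] (bY::bY::bX::bX::w)
      = qcons F bY (qcons F bY (qcons F bX (qcons F bX
          (qsh q w [bX] - qsh q [bX] w))))
        + (1 - q^(-4:ℤ)) • (Finsupp.single (bY::bY::bX::bX::bX::w) (1:F)
            - Finsupp.single (bX::bY::bY::bX::bX::w) (1:F)) := by
  rw [qshA, qshA, qshA, qshA, qshB, qshB, qshB, qshB]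
  simp only [qE_cons, h, map_add, map_smul, map_sub, qcons_single]
  have e1 : qbr bX bY = -2 := by decide
  have e2 : qbr bX bX = 2 := by decide
  have e3 : qbr bY bX = -2 := by decide
  rw [e1, e2, e3]
  simp only [smul_add, smul_sub, smul_smul, ← zpow_add₀ hq]
  norm_num only [zpow_zero]
  module

/-- `[(yyxx)^n yy, x] = (1 − q^{-4})((yyxx)^n yyx − xyy(xxyy)^n)` in the q-shuffle algebra. -/
theorem stmt2 {F : Type*} [Field F] [CharZero F] (q : F) (hq : q ≠ 0)
    (hq1 : ∀ m : ℕ, 0 < m → q ^ m ≠ 1) (n : ℕ) :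
    qsh q (wpow wYYXX n ++ [bY, bY]) [bX] - qsh q [bX] (wpow wYYXX n ++ [bY, bY])
      = (1 - q ^ (-4 : ℤ)) •
          (Finsupp.single (wpow wYYXX n ++ [bY, bY, bX]) (1 : F)
            - Finsupp.single ([bX, bY, bY] ++ wpow wXXYY n) (1 : F)) := by
  induction n with
  | zero =>
      show qsh q [bY, bY] [bX] - qsh q [bX] [bY, bY] = _
      rw [qshA, qshA, qshB, qshB, qsh_nil_left, qsh_nil_right]
      simp only [qE_cons, map_add, map_smul, qcons_single, qE, List.map_cons, List.sum_cons, List.map_nil, List.sum_nil]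
      have e1 : qbr bX bY = -2 := by decide
      have e3 : qbr bY bX = -2 := by decide
      rw [e1, e3]
      simp only [List.map_nil, List.sum_nil, add_zero, smul_add, smul_smul,
        ← zpow_add₀ hq]
      norm_num only [zpow_zero]
      simp only [wpow, List.nil_append, List.append_nil]
      module
  | succ n ih =>
      have hw : wpow wYYXX (n + 1) ++ [bY, bY]
          = bY :: bY :: bX :: bX :: (wpow wYYXX n ++ [bY, bY]) := by
        show (wYYXX ++ wpow wYYXX n) ++ [bY, bY] = _
        simp [wYYXX]
      rw [hw, step q hq _ (qE_bX_word n), ih]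
      have hw2 : wpow wYYXX (n + 1) ++ [bY, bY, bX]
          = bY :: bY :: bX :: bX :: (wpow wYYXX n ++ [bY, bY, bX]) := by
        show (wYYXX ++ wpow wYYXX n) ++ [bY, bY, bX] = _
        simp [wYYXX]
      have hw3 : bY :: bY :: bX :: bX :: ([bX, bY, bY] ++ wpow wXXYY n)
          = bY :: bY :: bX :: bX :: bX :: (wpow wYYXX n ++ [bY, bY]) := by
        rw [word_shift n]; rfl
      have hw4 : [bX, bY, bY] ++ wpow wXXYY (n + 1)
          = bX :: bY :: bY :: bX :: bX :: (wpow wYYXX n ++ [bY, bY]) := by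
        rw [word_shift n]
        show _ ++ (wXXYY ++ wpow wXXYY n) = _
        simp [wXXYY]
      rw [hw2, hw4]
      simp only [map_smul, map_sub, qcons_single, hw3]
      module
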